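/- (Nussbaum/Kingman convexity for matrices) Let (L(s))_{s∈[0,1]} be a family of essentially nonnegative irreducible N×N real matrices such that for each pair (i,j): if i = j, then s ↦ L(s)_{i,i} is convex on [0,1]; and if i ≠ j, then s ↦ L(s)_{i,j} is either identically zero or log-convex on [0,1]. Then s ↦ λ_PF(L(s)) is convex on [0,1], i.e. λ_PF(L(s)) ≤ (1−s)·λ_PF(L(0)) + s·λ_PF(L(1)) for all s ∈ [0,1]. -/

import Mathlib

/-!
Let `u`, `w` be positive eigenvectors of `L 0`, `L 1` with eigenvalues `ρ₀`, `ρ₁`. The geometric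
interpolation `x = u ^ (1 - s) * w ^ s` is positive and satisfies
`L s x ≤ ((1 - s) ρ₀ + s ρ₁) x` entrywise: the diagonal entries by convexity, the off-diagonal
part of row `i` by log-convexity, Hölder's inequality and the weighted AM-GM inequality, since
`∑_{j ≠ i} L 0 i j u j = (ρ₀ - L 0 i i) u i`. By the Collatz–Wielandt bound every eigenvalue of
`L s` then has real part at most `(1 - s) ρ₀ + s ρ₁`, while `ρ₀ ≤ lam 0` and `ρ₁ ≤ lam 1`.

Positive eigenvectors exist: adding a multiple of `1` makes the matrix `B` nonnegative, and a
maximiser of `ρ` over `{(ρ, x) | x ∈ stdSimplex, ρ x ≤ B x}` is turned into a positive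
eigenvector by `(1 + B) ^ (N - 1)`, which by irreducibility maps nonzero nonnegative vectors to
positive ones.
-/

open Matrix

/-- `μ` is a (complex) eigenvalue of the real matrix `A`. -/
def IsEigenvalue {N : ℕ} (A : Matrix (Fin N) (Fin N) ℝ) (μ : ℂ) : Prop :=
  ∃ v : Fin N → ℂ, v ≠ 0 ∧ (A.map Complex.ofReal).mulVec v = μ • v

/-- `A` has no nontrivial invariant coordinate subspace spanned by standard basis vectors. -/
def MatIrreducible {N : ℕ} (A : Matrix (Fin N) (Fin N) ℝ) : Prop :=
  ∀ S : Finset (Fin N), S.Nonempty → S ≠ Finset.univ → ∃ i ∈ S, ∃ j ∉ S, A j i ≠ 0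

open Finset

lemma sum_rpow_mul_rpow_le {ι : Type*} (t : Finset ι) {s : ℝ} (hs0 : 0 ≤ s) (hs1 : s ≤ 1)
    {a b : ι → ℝ} (ha : ∀ j ∈ t, 0 ≤ a j) (hb : ∀ j ∈ t, 0 ≤ b j) :
    ∑ j ∈ t, a j ^ (1 - s) * b j ^ s ≤ (∑ j ∈ t, a j) ^ (1 - s) * (∑ j ∈ t, b j) ^ s := by
  rcases hs0.eq_or_lt with rfl | hs0
  · simp
  rcases hs1.eq_or_lt with rfl | hs1
  · simp
  have holder := Real.inner_le_Lp_mul_Lq_of_nonneg t (f := fun j => a j ^ (1 - s))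
    (g := fun j => b j ^ s) (.one_sub_inv_inv hs0 hs1)
    (fun j hj => Real.rpow_nonneg (ha j hj) _) (fun j hj => Real.rpow_nonneg (hb j hj) _)
  simp only [one_div, inv_inv] at holder
  convert holder using 3 <;> refine sum_congr rfl fun j hj => (Real.rpow_rpow_inv ?_ ?_).symm
  exacts [ha j hj, (sub_pos.2 hs1).ne', hb j hj, hs0.ne']

section

variable {N : ℕ}

lemma IsEigenvalue.dim_pos {A : Matrix (Fin N) (Fin N) ℝ} {ν : ℂ} (h : IsEigenvalue A ν) : 0 < N := by
  obtain ⟨v, hv, -⟩ := h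
  obtain ⟨i, -⟩ := Function.ne_iff.1 hv
  exact i.pos

lemma isEigenvalue_of_mulVec_eq_smul {A : Matrix (Fin N) (Fin N) ℝ} {u : Fin N → ℝ} (hu : u ≠ 0)
    {ρ : ℝ} (h : A *ᵥ u = ρ • u) : IsEigenvalue A ρ := by
  refine ⟨Complex.ofRealHom ∘ u, fun h0 => hu (funext fun i => by simpa using congrFun h0 i), ?_⟩
  ext i
  have := congrArg Complex.ofReal (congrFun h i)
  simpa [mulVec, dotProduct] using this

lemma add_smul_one_mulVec (A : Matrix (Fin N) (Fin N) ℝ) (c : ℝ) (x : Fin N → ℝ) :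
    (A + c • 1) *ᵥ x = A *ᵥ x + c • x := by
  rw [add_mulVec, smul_mulVec, one_mulVec]

lemma exists_nonneg_add_smul_one {A : Matrix (Fin N) (Fin N) ℝ}
    (hA : ∀ i j, i ≠ j → 0 ≤ A i j) : ∃ c : ℝ, ∀ i j, 0 ≤ (A + c • 1) i j := by
  refine ⟨∑ k, |A k k|, fun i j => ?_⟩
  rcases eq_or_ne i j with rfl | hij
  · have : |A i i| ≤ ∑ k, |A k k| :=
      single_le_sum (f := fun k => |A k k|) (fun k _ => abs_nonneg _) (mem_univ i)
    simp only [Matrix.add_apply, Matrix.smul_apply, one_apply_eq, smul_eq_mul, mul_one]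
    linarith [neg_abs_le (A i i)]
  · simpa [one_apply_ne hij] using hA i j hij

lemma MatIrreducible.add_smul_one {A : Matrix (Fin N) (Fin N) ℝ} (hA : MatIrreducible A)
    (c : ℝ) : MatIrreducible (A + c • 1) := by
  intro S hS hSU
  obtain ⟨i, hi, j, hj, hji⟩ := hA S hS hSU
  have hne : j ≠ i := fun h => hj (h ▸ hi)
  exact ⟨i, hi, j, hj, by simpa [one_apply_ne hne] using hji⟩

lemma IsEigenvalue.add_smul_one {A : Matrix (Fin N) (Fin N) ℝ} {ν : ℂ} (h : IsEigenvalue A ν)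
    (c : ℝ) : IsEigenvalue (A + c • 1) (ν + c) := by
  obtain ⟨v, hv0, hv⟩ := h
  refine ⟨v, hv0, ?_⟩
  have hmap : (A + c • 1).map Complex.ofReal = A.map Complex.ofReal + (c : ℂ) • 1 := by
    ext i j
    rcases eq_or_ne i j with rfl | hij <;> simp [one_apply, *]
  rw [hmap, add_mulVec, smul_mulVec, one_mulVec, hv, add_smul]

lemma norm_le_of_mulVec_le_smul {B : Matrix (Fin N) (Fin N) ℝ} (hB : ∀ i j, 0 ≤ B i j)
    {x : Fin N → ℝ} (hx : ∀ i, 0 < x i) {μ : ℝ} (hBx : ∀ i, (B *ᵥ x) i ≤ μ * x i)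
    {ν : ℂ} (hν : IsEigenvalue B ν) : ‖ν‖ ≤ μ := by
  obtain ⟨v, hv0, hv⟩ := hν
  obtain ⟨k, hk⟩ := Function.ne_iff.1 hv0
  obtain ⟨i, -, hi⟩ := exists_max_image univ (fun i => ‖v i‖ / x i) ⟨k, mem_univ k⟩
  set t := ‖v i‖ / x i
  have hvt : ∀ j, ‖v j‖ ≤ t * x j := fun j => (div_le_iff₀ (hx j)).1 (hi j (mem_univ j))
  have hvi : ‖v i‖ = t * x i := (div_mul_cancel₀ _ (hx i).ne').symm
  have ht : 0 < t := (div_pos (norm_pos_iff.2 hk) (hx k)).trans_le (hi k (mem_univ k))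
  have hvi_pos : 0 < ‖v i‖ := hvi ▸ mul_pos ht (hx i)
  refine le_of_mul_le_mul_right ?_ hvi_pos
  calc ‖ν‖ * ‖v i‖ = ‖∑ j, (B i j : ℂ) * v j‖ := by
        rw [← norm_mul, ← smul_eq_mul, ← Pi.smul_apply ν v i, ← hv]; rfl
    _ ≤ ∑ j, B i j * ‖v j‖ := (norm_sum_le _ _).trans_eq <| sum_congr rfl fun j _ => by
        rw [norm_mul, Complex.norm_real, Real.norm_of_nonneg (hB i j)]
    _ ≤ ∑ j, B i j * (t * x j) := sum_le_sum fun j _ => mul_le_mul_of_nonneg_left (hvt j) (hB i j)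
    _ = t * (B *ᵥ x) i := by
        simp only [mulVec, dotProduct, mul_sum]
        exact sum_congr rfl fun j _ => by ring
    _ ≤ t * (μ * x i) := mul_le_mul_of_nonneg_left (hBx i) ht.le
    _ = μ * ‖v i‖ := by rw [hvi]; ring

lemma re_le_of_mulVec_le_smul {A : Matrix (Fin N) (Fin N) ℝ} (hA : ∀ i j, i ≠ j → 0 ≤ A i j)
    {x : Fin N → ℝ} (hx : ∀ i, 0 < x i) {μ : ℝ} (hAx : ∀ i, (A *ᵥ x) i ≤ μ * x i)
    {ν : ℂ} (hν : IsEigenvalue A ν) : ν.re ≤ μ := by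
  obtain ⟨c, hc⟩ := exists_nonneg_add_smul_one hA
  have hshift : ∀ i, ((A + c • 1) *ᵥ x) i ≤ (μ + c) * x i := fun i => by
    rw [add_smul_one_mulVec, Pi.add_apply, Pi.smul_apply, smul_eq_mul]
    linarith [hAx i]
  have hnorm := norm_le_of_mulVec_le_smul hc hx hshift (hν.add_smul_one c)
  have hre := Complex.re_le_norm (ν + c)
  rw [Complex.add_re, Complex.ofReal_re] at hre
  linarith

noncomputable def posSupport (y : Fin N → ℝ) : Finset (Fin N) := {i | 0 < y i}

lemma mem_posSupport {y : Fin N → ℝ} {i : Fin N} : i ∈ posSupport y ↔ 0 < y i := by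
  simp [posSupport]

lemma posSupport_nonempty {y : Fin N → ℝ} (hy : 0 ≤ y) (hy0 : y ≠ 0) :
    (posSupport y).Nonempty := by
  obtain ⟨i, hi⟩ := Function.ne_iff.1 hy0
  exact ⟨i, mem_posSupport.2 ((hy i).lt_of_ne' hi)⟩

lemma posSupport_mono {y y' : Fin N → ℝ} (h : y ≤ y') : posSupport y ⊆ posSupport y' :=
  fun i hi => mem_posSupport.2 ((mem_posSupport.1 hi).trans_le (h i))

lemma mulVec_nonneg {B : Matrix (Fin N) (Fin N) ℝ} (hB : ∀ i j, 0 ≤ B i j) {y : Fin N → ℝ}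
    (hy : 0 ≤ y) : 0 ≤ B *ᵥ y :=
  fun i => show (0 : ℝ) ≤ ∑ j, B i j * y j from sum_nonneg fun j _ => mul_nonneg (hB i j) (hy j)

lemma le_one_add_mulVec {B : Matrix (Fin N) (Fin N) ℝ} (hB : ∀ i j, 0 ≤ B i j)
    {y : Fin N → ℝ} (hy : 0 ≤ y) : y ≤ (1 + B) *ᵥ y := by
  rw [add_mulVec, one_mulVec]
  exact le_add_of_nonneg_right (mulVec_nonneg hB hy)

lemma posSupport_ssubset_one_add_mulVec {B : Matrix (Fin N) (Fin N) ℝ} (hB : ∀ i j, 0 ≤ B i j)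
    (hirr : MatIrreducible B) {y : Fin N → ℝ} (hy : 0 ≤ y) (hne : (posSupport y).Nonempty)
    (hnu : posSupport y ≠ univ) : posSupport y ⊂ posSupport ((1 + B) *ᵥ y) := by
  have hsub := posSupport_mono (le_one_add_mulVec hB hy)
  obtain ⟨i, hi, j, hj, hji⟩ := hirr _ hne hnu
  refine (ssubset_iff_of_subset hsub).2 ⟨j, mem_posSupport.2 ?_, hj⟩
  have hterm : B j i * y i ≤ (B *ᵥ y) j :=
    single_le_sum (f := fun k => B j k * y k) (fun k _ => mul_nonneg (hB j k) (hy k)) (mem_univ i)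
  have := mul_pos ((hB j i).lt_of_ne' hji) (mem_posSupport.1 hi)
  rw [add_mulVec, one_mulVec, Pi.add_apply]
  exact add_pos_of_nonneg_of_pos (hy j) (this.trans_le hterm)

lemma pow_mulVec_nonneg {B : Matrix (Fin N) (Fin N) ℝ} (hB : ∀ i j, 0 ≤ B i j)
    {y : Fin N → ℝ} (hy : 0 ≤ y) (k : ℕ) : 0 ≤ (1 + B) ^ k *ᵥ y := by
  induction k with
  | zero => rwa [pow_zero, one_mulVec]
  | succ k ih =>
    rw [pow_succ', ← mulVec_mulVec]
    exact ih.trans (le_one_add_mulVec hB ih)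

lemma min_le_card_posSupport_pow_mulVec {B : Matrix (Fin N) (Fin N) ℝ} (hB : ∀ i j, 0 ≤ B i j)
    (hirr : MatIrreducible B) {y : Fin N → ℝ} (hy : 0 ≤ y) (hy0 : y ≠ 0) (k : ℕ) :
    min N (k + 1) ≤ #(posSupport ((1 + B) ^ k *ᵥ y)) := by
  have hN : 0 < N := by
    simpa using (posSupport_nonempty hy hy0).card_pos.trans_le (card_le_univ _)
  induction k with
  | zero =>
    rw [pow_zero, one_mulVec]
    exact (min_le_right _ _).trans (card_pos.2 (posSupport_nonempty hy hy0))
  | succ k ih =>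
    rw [pow_succ', ← mulVec_mulVec]
    have hz := pow_mulVec_nonneg hB hy k
    set z := (1 + B) ^ k *ᵥ y
    by_cases hU : posSupport z = univ
    · rw [eq_univ_of_forall fun i => posSupport_mono (le_one_add_mulVec hB hz) (hU ▸ mem_univ i)]
      simp
    · have hne : (posSupport z).Nonempty := card_pos.1 (by omega)
      have h1 := card_lt_card (posSupport_ssubset_one_add_mulVec hB hirr hz hne hU)
      have h2 := card_lt_card (ssubset_univ_iff.2 hU)
      simp only [card_univ, Fintype.card_fin] at h2
      omega

lemma pow_mulVec_pos {B : Matrix (Fin N) (Fin N) ℝ} (hB : ∀ i j, 0 ≤ B i j)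
    (hirr : MatIrreducible B) {y : Fin N → ℝ} (hy : 0 ≤ y) (hy0 : y ≠ 0) (i : Fin N) :
    0 < ((1 + B) ^ (N - 1) *ᵥ y) i := by
  have hcard := min_le_card_posSupport_pow_mulVec hB hirr hy hy0 (N - 1)
  rw [Nat.sub_add_cancel i.pos, min_self] at hcard
  have huniv := eq_univ_of_card _ (le_antisymm (card_le_univ _) (by rwa [Fintype.card_fin]))
  exact mem_posSupport.1 (huniv ▸ mem_univ i)

lemma le_sum_sum_of_smul_le_mulVec {B : Matrix (Fin N) (Fin N) ℝ} (hB : ∀ i j, 0 ≤ B i j)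
    {x : Fin N → ℝ} (hx : x ∈ stdSimplex ℝ (Fin N)) {ρ : ℝ} (hρ : ∀ i, ρ * x i ≤ (B *ᵥ x) i) :
    ρ ≤ ∑ i, ∑ j, B i j :=
  calc ρ = ∑ i, ρ * x i := by rw [← mul_sum, hx.2, mul_one]
    _ ≤ ∑ i, ∑ j, B i j * x j := sum_le_sum fun i _ => hρ i
    _ ≤ ∑ i, ∑ j, B i j := sum_le_sum fun i _ => sum_le_sum fun j _ =>
        mul_le_of_le_one_right (hB i j) (hx.2 ▸ single_le_sum (fun k _ => hx.1 k) (mem_univ j))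

lemma inv_sum_smul_mem_stdSimplex {ι : Type*} [Fintype ι] [Nonempty ι] {u : ι → ℝ}
    (hu : ∀ i, 0 < u i) : (∑ i, u i)⁻¹ • u ∈ stdSimplex ℝ ι := by
  have hsum : 0 < ∑ i, u i := sum_pos (fun i _ => hu i) univ_nonempty
  refine ⟨fun i => smul_nonneg (inv_nonneg.2 hsum.le) (hu i).le, ?_⟩
  simp only [Pi.smul_apply, smul_eq_mul, ← mul_sum, inv_mul_cancel₀ hsum.ne']

lemma mulVec_one_add_pow_mulVec (B : Matrix (Fin N) (Fin N) ℝ) (k : ℕ) (x : Fin N → ℝ) :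
    B *ᵥ ((1 + B) ^ k *ᵥ x) = (1 + B) ^ k *ᵥ (B *ᵥ x) := by
  have hcomm : Commute ((1 + B) ^ k) B := ((Commute.one_left B).add_left (.refl B)).pow_left k
  rw [mulVec_mulVec, mulVec_mulVec, hcomm.eq]

def collatzWielandtSet (B : Matrix (Fin N) (Fin N) ℝ) : Set (ℝ × (Fin N → ℝ)) :=
  {p | 0 ≤ p.1 ∧ p.2 ∈ stdSimplex ℝ (Fin N) ∧ ∀ i, p.1 * p.2 i ≤ (B *ᵥ p.2) i}

lemma isCompact_collatzWielandtSet {B : Matrix (Fin N) (Fin N) ℝ} (hB : ∀ i j, 0 ≤ B i j) :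
    IsCompact (collatzWielandtSet B) := by
  have hclosed : IsClosed (collatzWielandtSet B) := by
    simp only [collatzWielandtSet, Set.ofPred_and, Set.ofPred_forall]
    refine (isClosed_le continuous_const continuous_fst).inter
      (((isClosed_stdSimplex ℝ (Fin N)).preimage continuous_snd).inter
        (isClosed_iInter fun i => isClosed_le (by fun_prop) ?_))
    exact (continuous_apply i).comp (continuous_const.matrix_mulVec continuous_snd)
  exact (isCompact_Icc.prod (isCompact_stdSimplex ℝ (Fin N))).of_isClosed_subset hclosed
    fun p hp => ⟨⟨hp.1, le_sum_sum_of_smul_le_mulVec hB hp.2.1 hp.2.2⟩, hp.2.1⟩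

lemma collatzWielandtSet_nonempty (hN : 0 < N) {B : Matrix (Fin N) (Fin N) ℝ}
    (hB : ∀ i j, 0 ≤ B i j) : (collatzWielandtSet B).Nonempty :=
  ⟨(0, Pi.single ⟨0, hN⟩ 1), le_rfl, single_mem_stdSimplex ℝ _,
    fun i => by simpa using mulVec_nonneg hB (single_mem_stdSimplex ℝ _).1 i⟩

/-- `(1 + B) ^ (N - 1)` spreads the defect `B x - r x` to every coordinate, which leaves room
to increase `r`. -/
lemma exists_add_mem_collatzWielandtSet {B : Matrix (Fin N) (Fin N) ℝ} (hB : ∀ i j, 0 ≤ B i j)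
    (hirr : MatIrreducible B) {r : ℝ} (hr : 0 ≤ r) {x : Fin N → ℝ} (hx0 : 0 ≤ x) (hx : x ≠ 0)
    (hrx : ∀ i, r * x i ≤ (B *ᵥ x) i) (hne : B *ᵥ x - r • x ≠ 0) :
    ∃ ε > 0, ∃ y, (r + ε, y) ∈ collatzWielandtSet B := by
  obtain ⟨i₀, -⟩ := Function.ne_iff.1 hx
  have : Nonempty (Fin N) := ⟨i₀⟩
  set P := (1 + B) ^ (N - 1)
  set z := B *ᵥ x - r • x
  have hu := pow_mulVec_pos hB hirr hx0 hx
  have hw := pow_mulVec_pos hB hirr (show 0 ≤ z from fun i => sub_nonneg.2 (hrx i)) hne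
  have hBu : B *ᵥ (P *ᵥ x) = r • P *ᵥ x + P *ᵥ z := by
    rw [mulVec_one_add_pow_mulVec, ← mulVec_smul, ← mulVec_add, add_sub_cancel]
  obtain ⟨k, hk⟩ := Finite.exists_min fun i => (P *ᵥ z) i / (P *ᵥ x) i
  set ε := (P *ᵥ z) k / (P *ᵥ x) k
  have hε : 0 < ε := div_pos (hw k) (hu k)
  refine ⟨_, hε, (∑ i, (P *ᵥ x) i)⁻¹ • P *ᵥ x, add_nonneg hr hε.le,
    inv_sum_smul_mem_stdSimplex hu, fun i => ?_⟩
  have := (le_div_iff₀ (hu i)).1 (hk i)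
  simp only [mulVec_smul, Pi.smul_apply, smul_eq_mul, hBu, Pi.add_apply]
  rw [mul_left_comm]
  refine mul_le_mul_of_nonneg_left ?_ (inv_nonneg.2 (sum_nonneg fun i _ => (hu i).le))
  linarith

lemma exists_pos_eigenvector_of_nonneg (hN : 0 < N) {B : Matrix (Fin N) (Fin N) ℝ}
    (hB : ∀ i j, 0 ≤ B i j) (hirr : MatIrreducible B) :
    ∃ ρ : ℝ, ∃ u : Fin N → ℝ, (∀ i, 0 < u i) ∧ B *ᵥ u = ρ • u := by
  obtain ⟨⟨r, x⟩, ⟨hr, hxΔ, hx⟩, hmax⟩ := (isCompact_collatzWielandtSet hB).exists_isMaxOn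
    (collatzWielandtSet_nonempty hN hB) continuous_fst.continuousOn
  dsimp only at hr hxΔ hx
  have hx0 : x ≠ 0 := fun h => by simpa [h] using hxΔ.2
  by_cases hz : B *ᵥ x - r • x = 0
  · refine ⟨r, _, pow_mulVec_pos hB hirr hxΔ.1 hx0, ?_⟩
    rw [mulVec_one_add_pow_mulVec, sub_eq_zero.1 hz, mulVec_smul]
  obtain ⟨ε, hε, y, hy⟩ := exists_add_mem_collatzWielandtSet hB hirr hr hxΔ.1 hx0 hx hz
  have : r + ε ≤ r := hmax hy
  linarith

lemma exists_pos_eigenvector (hN : 0 < N) {A : Matrix (Fin N) (Fin N) ℝ}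
    (hA : ∀ i j, i ≠ j → 0 ≤ A i j) (hirr : MatIrreducible A) :
    ∃ ρ : ℝ, ∃ u : Fin N → ℝ, (∀ i, 0 < u i) ∧ A *ᵥ u = ρ • u := by
  obtain ⟨c, hc⟩ := exists_nonneg_add_smul_one hA
  obtain ⟨r, u, hu, hBu⟩ := exists_pos_eigenvector_of_nonneg hN hc (hirr.add_smul_one c)
  refine ⟨r - c, u, hu, ?_⟩
  rw [add_smul_one_mulVec] at hBu
  rw [sub_smul, ← hBu, add_sub_cancel_right]

lemma sum_erase_mul_eq {A : Matrix (Fin N) (Fin N) ℝ} {u : Fin N → ℝ} {ρ : ℝ}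
    (h : A *ᵥ u = ρ • u) (i : Fin N) :
    ∑ j ∈ univ.erase i, A i j * u j = (ρ - A i i) * u i := by
  have hi : ∑ j, A i j * u j = ρ * u i := congrFun h i
  rw [← add_sum_erase _ _ (mem_univ i)] at hi
  linarith

lemma diag_le_of_pos_eigenvector {A : Matrix (Fin N) (Fin N) ℝ}
    (hA : ∀ i j, i ≠ j → 0 ≤ A i j) {u : Fin N → ℝ} (hu : ∀ i, 0 < u i) {ρ : ℝ}
    (h : A *ᵥ u = ρ • u) (i : Fin N) : A i i ≤ ρ :=
  sub_nonneg.1 <| nonneg_of_mul_nonneg_left (sum_erase_mul_eq h i ▸ sum_nonneg fun j hj =>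
    mul_nonneg (hA i j (ne_of_mem_erase hj).symm) (hu j).le) (hu i)

lemma sum_erase_mul_rpow_mul_rpow_le {A₀ A₁ A : Matrix (Fin N) (Fin N) ℝ} {s : ℝ} (hs0 : 0 ≤ s)
    (hs1 : s ≤ 1) (hA₀ : ∀ i j, i ≠ j → 0 ≤ A₀ i j) (hA₁ : ∀ i j, i ≠ j → 0 ≤ A₁ i j)
    (hoff : ∀ i j, i ≠ j → A i j ≤ A₀ i j ^ (1 - s) * A₁ i j ^ s)
    {ρ₀ ρ₁ : ℝ} {u w : Fin N → ℝ} (hu : ∀ i, 0 < u i) (hw : ∀ i, 0 < w i)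
    (hu_eig : A₀ *ᵥ u = ρ₀ • u) (hw_eig : A₁ *ᵥ w = ρ₁ • w) (i : Fin N) :
    ∑ j ∈ univ.erase i, A i j * (u j ^ (1 - s) * w j ^ s)
      ≤ ((1 - s) * (ρ₀ - A₀ i i) + s * (ρ₁ - A₁ i i)) * (u i ^ (1 - s) * w i ^ s) := by
  have hd₀ := sub_nonneg.2 (diag_le_of_pos_eigenvector hA₀ hu hu_eig i)
  have hd₁ := sub_nonneg.2 (diag_le_of_pos_eigenvector hA₁ hw hw_eig i)
  have hx : 0 ≤ u i ^ (1 - s) * w i ^ s :=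
    (mul_pos (Real.rpow_pos_of_pos (hu i) _) (Real.rpow_pos_of_pos (hw i) _)).le
  calc ∑ j ∈ univ.erase i, A i j * (u j ^ (1 - s) * w j ^ s)
      ≤ ∑ j ∈ univ.erase i, (A₀ i j * u j) ^ (1 - s) * (A₁ i j * w j) ^ s :=
        sum_le_sum fun j hj => by
          have hij := (ne_of_mem_erase hj).symm
          rw [Real.mul_rpow (hA₀ i j hij) (hu j).le, Real.mul_rpow (hA₁ i j hij) (hw j).le,
            mul_mul_mul_comm]
          exact mul_le_mul_of_nonneg_right (hoff i j hij)
            (mul_pos (Real.rpow_pos_of_pos (hu j) _) (Real.rpow_pos_of_pos (hw j) _)).le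
    _ ≤ (∑ j ∈ univ.erase i, A₀ i j * u j) ^ (1 - s) * (∑ j ∈ univ.erase i, A₁ i j * w j) ^ s :=
        sum_rpow_mul_rpow_le _ hs0 hs1
          (fun j hj => mul_nonneg (hA₀ i j (ne_of_mem_erase hj).symm) (hu j).le)
          (fun j hj => mul_nonneg (hA₁ i j (ne_of_mem_erase hj).symm) (hw j).le)
    _ = (ρ₀ - A₀ i i) ^ (1 - s) * (ρ₁ - A₁ i i) ^ s * (u i ^ (1 - s) * w i ^ s) := by
        rw [sum_erase_mul_eq hu_eig, sum_erase_mul_eq hw_eig, Real.mul_rpow hd₀ (hu i).le,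
          Real.mul_rpow hd₁ (hw i).le, mul_mul_mul_comm]
    _ ≤ _ := mul_le_mul_of_nonneg_right
        (Real.geom_mean_le_arith_mean2_weighted (sub_nonneg.2 hs1) hs0 hd₀ hd₁ (by ring)) hx

lemma mulVec_rpow_mul_rpow_le {A₀ A₁ A : Matrix (Fin N) (Fin N) ℝ} {s : ℝ} (hs0 : 0 ≤ s)
    (hs1 : s ≤ 1) (hA₀ : ∀ i j, i ≠ j → 0 ≤ A₀ i j) (hA₁ : ∀ i j, i ≠ j → 0 ≤ A₁ i j)
    (hdiag : ∀ i, A i i ≤ (1 - s) * A₀ i i + s * A₁ i i)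
    (hoff : ∀ i j, i ≠ j → A i j ≤ A₀ i j ^ (1 - s) * A₁ i j ^ s)
    {ρ₀ ρ₁ : ℝ} {u w : Fin N → ℝ} (hu : ∀ i, 0 < u i) (hw : ∀ i, 0 < w i)
    (hu_eig : A₀ *ᵥ u = ρ₀ • u) (hw_eig : A₁ *ᵥ w = ρ₁ • w) (i : Fin N) :
    (A *ᵥ fun j => u j ^ (1 - s) * w j ^ s) i
      ≤ ((1 - s) * ρ₀ + s * ρ₁) * (u i ^ (1 - s) * w i ^ s) := by
  have hx : 0 ≤ u i ^ (1 - s) * w i ^ s :=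
    (mul_pos (Real.rpow_pos_of_pos (hu i) _) (Real.rpow_pos_of_pos (hw i) _)).le
  calc (A *ᵥ fun j => u j ^ (1 - s) * w j ^ s) i
      = A i i * (u i ^ (1 - s) * w i ^ s)
          + ∑ j ∈ univ.erase i, A i j * (u j ^ (1 - s) * w j ^ s) :=
        (add_sum_erase _ (fun j => A i j * (u j ^ (1 - s) * w j ^ s)) (mem_univ i)).symm
    _ ≤ ((1 - s) * A₀ i i + s * A₁ i i) * (u i ^ (1 - s) * w i ^ s)
          + ((1 - s) * (ρ₀ - A₀ i i) + s * (ρ₁ - A₁ i i)) * (u i ^ (1 - s) * w i ^ s) :=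
        add_le_add (mul_le_mul_of_nonneg_right (hdiag i) hx)
          (sum_erase_mul_rpow_mul_rpow_le hs0 hs1 hA₀ hA₁ hoff hu hw hu_eig hw_eig i)
    _ = ((1 - s) * ρ₀ + s * ρ₁) * (u i ^ (1 - s) * w i ^ s) := by ring

end

lemma ConvexOn.le_rpow_mul_rpow_of_log {E : Type*} [AddCommGroup E] [Module ℝ E] {D : Set E}
    {f : E → ℝ} (hlog : ConvexOn ℝ D fun t => Real.log (f t)) (hf : ∀ t ∈ D, 0 < f t)
    {x y : E} (hx : x ∈ D) (hy : y ∈ D) {a b : ℝ} (ha : 0 ≤ a) (hb : 0 ≤ b) (hab : a + b = 1) :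
    f (a • x + b • y) ≤ f x ^ a * f y ^ b := by
  rw [← Real.exp_log (hf _ (hlog.1 hx hy ha hb hab)), Real.rpow_def_of_pos (hf x hx),
    Real.rpow_def_of_pos (hf y hy), ← Real.exp_add, Real.exp_le_exp, mul_comm,
    mul_comm (Real.log (f y))]
  exact hlog.2 hx hy ha hb hab

/-- Nussbaum/Kingman convexity: if `L(s)` is essentially
nonnegative irreducible with convex diagonal and log-convex (or identically
zero) off-diagonal entries, then the Perron–Frobenius eigenvalue
`lam(s)` (the eigenvalue of maximal real part) is convex in `s` on `[0,1]`. -/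
theorem PF_convexity (N : ℕ) (L : ℝ → Matrix (Fin N) (Fin N) ℝ)
    (hess : ∀ s ∈ Set.Icc (0:ℝ) 1, ∀ i j, i ≠ j → 0 ≤ L s i j)
    (hirr : ∀ s ∈ Set.Icc (0:ℝ) 1, MatIrreducible (L s))
    (hdiag : ∀ i, ConvexOn ℝ (Set.Icc (0:ℝ) 1) fun s => L s i i)
    (hoff : ∀ i j, i ≠ j →
      (∀ s ∈ Set.Icc (0:ℝ) 1, L s i j = 0) ∨
      ((∀ s ∈ Set.Icc (0:ℝ) 1, 0 < L s i j) ∧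
        ConvexOn ℝ (Set.Icc (0:ℝ) 1) fun s => Real.log (L s i j)))
    (lam : ℝ → ℝ)
    (hlam : ∀ s ∈ Set.Icc (0:ℝ) 1,
      IsEigenvalue (L s) ((lam s : ℝ) : ℂ) ∧
      ∀ μ : ℂ, IsEigenvalue (L s) μ → μ.re ≤ lam s) :
    ∀ s ∈ Set.Icc (0:ℝ) 1, lam s ≤ (1 - s) * lam 0 + s * lam 1 := by
  intro s hs
  have h0 : (0 : ℝ) ∈ Set.Icc (0 : ℝ) 1 := Set.left_mem_Icc.2 zero_le_one
  have h1 : (1 : ℝ) ∈ Set.Icc (0 : ℝ) 1 := Set.right_mem_Icc.2 zero_le_one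
  have hN : 0 < N := (hlam s hs).1.dim_pos
  have hne : ∀ v : Fin N → ℝ, (∀ i, 0 < v i) → v ≠ 0 := fun v hv h =>
    (hv ⟨0, hN⟩).ne' (congrFun h _)
  obtain ⟨ρ₀, u, hu, hu_eig⟩ := exists_pos_eigenvector hN (hess 0 h0) (hirr 0 h0)
  obtain ⟨ρ₁, w, hw, hw_eig⟩ := exists_pos_eigenvector hN (hess 1 h1) (hirr 1 h1)
  have hρ₀ : ρ₀ ≤ lam 0 := by
    simpa using (hlam 0 h0).2 _ (isEigenvalue_of_mulVec_eq_smul (hne u hu) hu_eig)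
  have hρ₁ : ρ₁ ≤ lam 1 := by
    simpa using (hlam 1 h1).2 _ (isEigenvalue_of_mulVec_eq_smul (hne w hw) hw_eig)
  have hdiag_s : ∀ i, L s i i ≤ (1 - s) * L 0 i i + s * L 1 i i := fun i => by
    simpa using (hdiag i).2 h0 h1 (sub_nonneg.2 hs.2) hs.1 (by ring)
  have hoff_s : ∀ i j, i ≠ j → L s i j ≤ L 0 i j ^ (1 - s) * L 1 i j ^ s := fun i j hij => by
    rcases hoff i j hij with hzero | ⟨hpos, hlog⟩
    · rw [hzero s hs, hzero 0 h0, hzero 1 h1]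
      positivity
    · simpa using hlog.le_rpow_mul_rpow_of_log hpos h0 h1 (sub_nonneg.2 hs.2) hs.1 (by ring)
  have hx := mulVec_rpow_mul_rpow_le hs.1 hs.2 (hess 0 h0) (hess 1 h1) hdiag_s hoff_s hu hw
    hu_eig hw_eig
  have hlam_s : lam s ≤ (1 - s) * ρ₀ + s * ρ₁ := by
    simpa using re_le_of_mulVec_le_smul (hess s hs)
      (fun i => mul_pos (Real.rpow_pos_of_pos (hu i) _) (Real.rpow_pos_of_pos (hw i) _))
      hx (hlam s hs).1
  linarith [mul_le_mul_of_nonneg_left hρ₀ (sub_nonneg.2 hs.2), mul_le_mul_of_nonneg_left hρ₁ hs.1]
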